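/- In Stalnaker's logic of knowledge and belief, for every agent label i and every formula φ, the axiom .2, i.e. ¬K_i ¬K_i φ → K_i ¬K_i ¬φ, is a theorem. -/
import Mathlib


/-- Formulas of the bimodal language of knowledge and belief:
⊥, variables, ∨, ∧, →, K_i, B_i. -/
inductive BForm (α P : Type) : Type
  | fls : BForm α P
  | var : P → BForm α P
  | dis : BForm α P → BForm α P → BForm α P
  | con : BForm α P → BForm α P → BForm α P
  | imp : BForm α P → BForm α P → BForm α P
  | know : α → BForm α P → BForm α P
  | bel : α → BForm α P → BForm α P

namespace BForm

/-- Negation ¬φ := φ → ⊥. -/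
def neg {α P : Type} (p : BForm α P) : BForm α P := p.imp .fls

/-- Biconditional φ ↔ ψ := (φ → ψ) ∧ (ψ → φ). -/
def iff' {α P : Type} (p q : BForm α P) : BForm α P := (p.imp q).con (q.imp p)

end BForm

/-- Boolean evaluation of a bimodal formula, treating modal subformulas as atoms. -/
def beval {α P : Type} (g : P → Bool) (h : BForm α P → Bool) : BForm α P → Bool
  | .fls => false
  | .var x => g x
  | .dis p q => beval g h p || beval g h q
  | .con p q => beval g h p && beval g h q
  | .imp p q => !(beval g h p) || beval g h q
  | .know i p => h (.know i p)
  | .bel i p => h (.bel i p)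

/-- Propositional tautologies of the bimodal language. -/
def BTautology {α P : Type} (p : BForm α P) : Prop := ∀ g h, beval g h p = true

/-- Stalnaker's logic of knowledge and belief: multi-agent S4 for the K_i
operators (tautologies, axioms K, T, 4, Modus Ponens, Necessitation for K_i)
together with the five Stalnaker axiom schemas for belief. -/
inductive SPrf {α P : Type} : BForm α P → Prop
  | taut {p} : BTautology p → SPrf p
  | axK {i p q} : SPrf (((BForm.know i (p.imp q)).con (BForm.know i p)).imp (BForm.know i q))
  | axT {i p} : SPrf ((BForm.know i p).imp p)
  | ax4 {i p} : SPrf ((BForm.know i p).imp (BForm.know i (BForm.know i p)))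
  | axPI {i p} : SPrf ((BForm.bel i p).imp (BForm.know i (BForm.bel i p)))
  | axNI {i p} : SPrf ((BForm.bel i p).neg.imp (BForm.know i (BForm.bel i p).neg))
  | axKB {i p} : SPrf ((BForm.know i p).imp (BForm.bel i p))
  | axCB {i p} : SPrf ((BForm.bel i p).imp (BForm.bel i p.neg).neg)
  | axSB {i p} : SPrf ((BForm.bel i p).imp (BForm.bel i (BForm.know i p)))
  | mp {p q} : SPrf (p.imp q) → SPrf p → SPrf q
  | nec {i p} : SPrf p → SPrf (BForm.know i p)

namespace SPrf

lemma imp_trans {α P : Type} {p q r : BForm α P} (h1 : SPrf (p.imp q))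
    (h2 : SPrf (q.imp r)) : SPrf (p.imp r) := by
  have t : SPrf ((p.imp q).imp ((q.imp r).imp (p.imp r))) := by
    apply taut; intro g h
    simp [beval]
    cases beval g h p <;> cases beval g h q <;> cases beval g h r <;> simp
  exact mp (mp t h1) h2

lemma contra {α P : Type} {p q : BForm α P} (h1 : SPrf (p.imp q)) :
    SPrf (q.neg.imp p.neg) := by
  have t : SPrf ((p.imp q).imp (q.neg.imp p.neg)) := by
    apply taut; intro g h
    simp [beval, BForm.neg]
    cases beval g h p <;> cases beval g h q <;> simp
  exact mp t h1

lemma dne {α P : Type} {p : BForm α P} : SPrf (p.neg.neg.imp p) := by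
  apply taut; intro g h
  simp [beval, BForm.neg]

lemma kdist {α P : Type} {i : α} {p q : BForm α P} (h1 : SPrf (p.imp q)) :
    SPrf ((BForm.know i p).imp (BForm.know i q)) := by
  have t : SPrf ((((BForm.know i (p.imp q)).con (BForm.know i p)).imp
      (BForm.know i q)).imp ((BForm.know i (p.imp q)).imp
      ((BForm.know i p).imp (BForm.know i q)))) := by
    apply taut; intro g h
    simp [beval]
    cases h (BForm.know i (p.imp q)) <;> cases h (BForm.know i p) <;>
      cases h (BForm.know i q) <;> simp
  exact mp (mp t axK) (nec h1)

end SPrf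

/-- In Stalnaker's logic of knowledge and belief, for every agent
label i and formula φ, the axiom .2, i.e. ¬K_i ¬K_i φ → K_i ¬K_i ¬φ, is a theorem. -/
theorem ax2_theorem_in_stalnaker {α P : Type} (i : α) (φ : BForm α P) :
    SPrf (((BForm.know i (BForm.know i φ).neg).neg).imp
          (BForm.know i (BForm.know i φ.neg).neg)) := by
  -- ¬Bφ → K¬Kφ
  have t3 : SPrf ((BForm.bel i φ).neg.imp (BForm.know i (BForm.know i φ).neg)) :=
    SPrf.imp_trans SPrf.axNI (SPrf.kdist (SPrf.contra SPrf.axKB))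
  -- ¬K¬Kφ → Bφ
  have s1 : SPrf ((BForm.know i (BForm.know i φ).neg).neg.imp (BForm.bel i φ)) :=
    SPrf.imp_trans (SPrf.contra t3) SPrf.dne
  -- Bφ → ¬B¬φ
  have s2 : SPrf ((BForm.bel i φ).imp (BForm.bel i φ.neg).neg) := SPrf.axCB
  -- ¬B¬φ → K¬B¬φ
  have s3 : SPrf ((BForm.bel i φ.neg).neg.imp (BForm.know i (BForm.bel i φ.neg).neg)) :=
    SPrf.axNI
  -- K¬B¬φ → K¬K¬φ
  have s4 : SPrf ((BForm.know i (BForm.bel i φ.neg).neg).imp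
      (BForm.know i (BForm.know i φ.neg).neg)) :=
    SPrf.kdist (SPrf.contra SPrf.axKB)
  exact SPrf.imp_trans (SPrf.imp_trans (SPrf.imp_trans s1 s2) s3) s4
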